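/- Heine's first transformation: for $|q|<1$, $|z|<1$, $|b|<1$, and $c$ not of the form $q^{-n}$, $\sum_{k=0}^\infty \frac{(a;q)_k (b;q)_k}{(c;q)_k (q;q)_k} z^k = \frac{(b;q)_\infty (az;q)_\infty}{(c;q)_\infty (z;q)_\infty} \sum_{k=0}^\infty \frac{(c/b;q)_k (z;q)_k}{(az;q)_k (q;q)_k} b^k$. -/

import Mathlib

noncomputable def qPoch (a q : ℂ) (n : ℕ) : ℂ := ∏ j ∈ Finset.range n, (1 - a * q ^ j)

noncomputable def qPochInf (a q : ℂ) : ℂ := ∏' j : ℕ, (1 - a * q ^ j)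

/-!
Write `h_a(z) = ∑ (a;q)_k / (q;q)_k z^k`. Comparing coefficients gives
`(1 - z) h_a(z) = (1 - a z) h_a(q z)`; iterating, `(z;q)_n h_a(z) = (az;q)_n h_a(z q^n)`, and
letting `n → ∞` (`h_a` is continuous at `0` with `h_a(0) = 1`) yields the q-binomial theorem
`h_a(z) = (az;q)_∞ / (z;q)_∞`.

For Heine's transformation, the q-binomial theorem at `(c/b, b q^k)` gives
`(b;q)_k / (c;q)_k = (b;q)_∞ / (c;q)_∞ · h_{c/b}(b q^k)`. Substituting this into the left side
produces an absolutely convergent double series in `z^k b^n q^{kn}`; after exchanging the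
summations, the inner sum over `k` is `h_a(z q^n) = (az;q)_∞ / (z;q)_∞ · (z;q)_n / (az;q)_n`.
-/

open Filter Topology

noncomputable def qBinomCoeff (a q : ℂ) (k : ℕ) : ℂ := qPoch a q k / qPoch q q k

noncomputable def qBinomSeries (a q w : ℂ) : ℂ := ∑' k, qBinomCoeff a q k * w ^ k

section QPochhammer

variable {q : ℂ}

lemma qPoch_zero (x q : ℂ) : qPoch x q 0 = 1 := Finset.prod_range_zero _

lemma qPoch_succ (x q : ℂ) (n : ℕ) : qPoch x q (n + 1) = qPoch x q n * (1 - x * q ^ n) :=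
  Finset.prod_range_succ _ n

lemma norm_mul_pow_lt_one (hq : ‖q‖ ≤ 1) {x : ℂ} (hx : ‖x‖ < 1) (n : ℕ) : ‖x * q ^ n‖ < 1 := by
  rw [norm_mul, norm_pow]
  exact mul_lt_one_of_nonneg_of_lt_one_left (norm_nonneg x) hx (pow_le_one₀ (norm_nonneg q) hq)

lemma summable_norm_neg_mul_pow (hq : ‖q‖ < 1) (x : ℂ) :
    Summable fun j : ℕ => ‖-(x * q ^ j)‖ := by
  simpa [norm_mul, norm_pow] using (summable_geometric_of_lt_one (norm_nonneg q) hq).mul_left ‖x‖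

lemma multipliable_one_sub_mul_pow (hq : ‖q‖ < 1) (x : ℂ) :
    Multipliable fun j : ℕ => 1 - x * q ^ j := by
  simpa [sub_eq_add_neg] using multipliable_one_add_of_summable (summable_norm_neg_mul_pow hq x)

lemma tendsto_qPoch (hq : ‖q‖ < 1) (x : ℂ) :
    Tendsto (qPoch x q) atTop (𝓝 (qPochInf x q)) :=
  (multipliable_one_sub_mul_pow hq x).hasProd.tendsto_prod_nat

lemma qPochInf_ne_zero (hq : ‖q‖ < 1) {x : ℂ} (hx : ∀ j : ℕ, x * q ^ j ≠ 1) :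
    qPochInf x q ≠ 0 := by
  simpa [qPochInf, sub_eq_add_neg] using tprod_one_add_ne_zero_of_summable
    (fun j => by simpa [← sub_eq_add_neg, sub_eq_zero] using (hx j).symm)
    (summable_norm_neg_mul_pow hq x)

lemma qPochInf_ne_zero_of_norm_lt_one (hq : ‖q‖ < 1) {x : ℂ} (hx : ‖x‖ < 1) :
    qPochInf x q ≠ 0 :=
  qPochInf_ne_zero hq fun j h => by simpa [h] using norm_mul_pow_lt_one hq.le hx j

lemma qPochInf_ne_zero_of_ne_inv_pow (hq : ‖q‖ < 1) {x : ℂ} (hx : ∀ n : ℕ, x ≠ (q ^ n)⁻¹) :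
    qPochInf x q ≠ 0 :=
  qPochInf_ne_zero hq fun j h => hx j (eq_inv_of_mul_eq_one_left h)

lemma qPochInf_eq_qPoch_mul (hq : ‖q‖ < 1) (x : ℂ) (n : ℕ) :
    qPochInf x q = qPoch x q n * qPochInf (x * q ^ n) q := by
  have hm : Multipliable fun j : ℕ => 1 - x * q ^ (j + n) :=
    (multipliable_one_sub_mul_pow hq (x * q ^ n)).congr fun j => by rw [pow_add]; ring
  rw [qPochInf, qPoch, ← hm.prod_mul_tprod_nat_mul' (f := fun j => 1 - x * q ^ j), qPochInf]
  congr 1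
  refine tprod_congr fun j => ?_
  rw [pow_add, mul_assoc, mul_comm (q ^ j)]

lemma qPochInf_mul_pow_ne_zero (hq : ‖q‖ < 1) {x : ℂ} (hx : qPochInf x q ≠ 0) (n : ℕ) :
    qPochInf (x * q ^ n) q ≠ 0 :=
  right_ne_zero_of_mul (qPochInf_eq_qPoch_mul hq x n ▸ hx)

lemma qPoch_div_qPoch (hq : ‖q‖ < 1) {x y : ℂ} {n : ℕ} (hy : qPochInf y q ≠ 0)
    (hx : qPochInf (x * q ^ n) q ≠ 0) :
    qPoch x q n / qPoch y q n
      = qPochInf x q / qPochInf y q * (qPochInf (y * q ^ n) q / qPochInf (x * q ^ n) q) := by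
  have hyn := qPochInf_mul_pow_ne_zero hq hy n
  rw [qPochInf_eq_qPoch_mul hq x n, qPochInf_eq_qPoch_mul hq y n]
  generalize qPochInf (x * q ^ n) q = X at hx ⊢
  generalize qPochInf (y * q ^ n) q = Y at hyn ⊢
  field_simp

end QPochhammer

section QBinomial

variable {a q : ℂ}

lemma qBinomCoeff_zero (a q : ℂ) : qBinomCoeff a q 0 = 1 := by
  simp [qBinomCoeff, qPoch_zero]

lemma qBinomCoeff_succ_mul {k : ℕ} (hk : q ^ (k + 1) ≠ 1) :
    qBinomCoeff a q (k + 1) * (1 - q ^ (k + 1)) = qBinomCoeff a q k * (1 - a * q ^ k) := by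
  have hk' : 1 - q ^ (k + 1) ≠ 0 := sub_ne_zero.mpr hk.symm
  rw [qBinomCoeff, qBinomCoeff, qPoch_succ, qPoch_succ, ← pow_succ']
  field_simp

lemma exists_norm_qBinomCoeff_le (hq : ‖q‖ < 1) (a : ℂ) : ∃ M, ∀ k, ‖qBinomCoeff a q k‖ ≤ M := by
  have hlim : Tendsto (qBinomCoeff a q) atTop (𝓝 (qPochInf a q / qPochInf q q)) :=
    (tendsto_qPoch hq a).div (tendsto_qPoch hq q) (qPochInf_ne_zero_of_norm_lt_one hq hq)
  obtain ⟨M, hM⟩ := isBounded_iff_forall_norm_le.mp (Metric.isBounded_range_of_tendsto _ hlim)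
  exact ⟨M, fun k => hM _ ⟨k, rfl⟩⟩

lemma summable_norm_qBinomCoeff_mul_pow (hq : ‖q‖ < 1) (a : ℂ) {w : ℂ} (hw : ‖w‖ < 1) :
    Summable fun k => ‖qBinomCoeff a q k * w ^ k‖ := by
  obtain ⟨M, hM⟩ := exists_norm_qBinomCoeff_le hq a
  refine ((summable_geometric_of_lt_one (norm_nonneg w) hw).mul_left M).of_nonneg_of_le
    (fun k => norm_nonneg _) fun k => ?_
  rw [norm_mul, norm_pow]
  exact mul_le_mul_of_nonneg_right (hM k) (by positivity)

lemma summable_qBinomCoeff_mul_pow (hq : ‖q‖ < 1) (a : ℂ) {w : ℂ} (hw : ‖w‖ < 1) :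
    Summable fun k => qBinomCoeff a q k * w ^ k :=
  (summable_norm_qBinomCoeff_mul_pow hq a hw).of_norm

lemma qBinomSeries_functional_eq (hq : ‖q‖ < 1) (a : ℂ) {w : ℂ} (hw : ‖w‖ < 1) :
    (1 - w) * qBinomSeries a q w = (1 - a * w) * qBinomSeries a q (q * w) := by
  have hs := summable_qBinomCoeff_mul_pow hq a hw
  have hs' := summable_qBinomCoeff_mul_pow hq a (w := q * w)
    (by simpa [mul_comm] using norm_mul_pow_lt_one hq.le hw 1)
  have key : qBinomSeries a q w - qBinomSeries a q (q * w)
      = w * (qBinomSeries a q w - a * qBinomSeries a q (q * w)) := calc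
    _ = ∑' k, qBinomCoeff a q k * (1 - q ^ k) * w ^ k := by
      rw [qBinomSeries, qBinomSeries, ← hs.tsum_sub hs']
      exact tsum_congr fun k => by ring
    _ = ∑' k, qBinomCoeff a q (k + 1) * (1 - q ^ (k + 1)) * w ^ (k + 1) := by
      rw [(hs.sub hs').congr (fun k => by ring) |>.tsum_eq_zero_add]
      simp
    _ = ∑' k, w * (qBinomCoeff a q k * w ^ k - a * (qBinomCoeff a q k * (q * w) ^ k)) := by
      refine tsum_congr fun k => ?_
      have hk : ‖q ^ (k + 1)‖ < 1 := by
        rw [norm_pow]; exact pow_lt_one₀ (norm_nonneg q) hq k.succ_ne_zero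
      rw [qBinomCoeff_succ_mul (fun h => by simp [h] at hk)]
      ring
    _ = _ := by
      rw [tsum_mul_left, hs.tsum_sub (hs'.mul_left a), tsum_mul_left, qBinomSeries, qBinomSeries]
  linear_combination key

lemma qPoch_mul_qBinomSeries (hq : ‖q‖ < 1) (a : ℂ) {z : ℂ} (hz : ‖z‖ < 1) (n : ℕ) :
    qPoch z q n * qBinomSeries a q z = qPoch (a * z) q n * qBinomSeries a q (z * q ^ n) := by
  induction n with
  | zero => simp [qPoch_zero]
  | succ n ih =>
    have hfe := qBinomSeries_functional_eq hq a (norm_mul_pow_lt_one hq.le hz n)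
    calc qPoch z q (n + 1) * qBinomSeries a q z
        = qPoch (a * z) q n * ((1 - z * q ^ n) * qBinomSeries a q (z * q ^ n)) := by
          rw [qPoch_succ, mul_right_comm, ih]
          ring
      _ = qPoch (a * z) q (n + 1) * qBinomSeries a q (z * q ^ (n + 1)) := by
          rw [hfe, qPoch_succ, show q * (z * q ^ n) = z * q ^ (n + 1) by ring]
          ring

lemma tendsto_qBinomSeries_mul_pow (hq : ‖q‖ < 1) (a : ℂ) {z : ℂ} (hz : ‖z‖ < 1) :
    Tendsto (fun n => qBinomSeries a q (z * q ^ n)) atTop (𝓝 1) := by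
  obtain ⟨M, hM⟩ := exists_norm_qBinomCoeff_le hq a
  have hlim : ∀ k, Tendsto (fun n => qBinomCoeff a q k * (z * q ^ n) ^ k) atTop
      (𝓝 (qBinomCoeff a q k * 0 ^ k)) := fun k => by
    simpa using (((tendsto_pow_atTop_nhds_zero_of_norm_lt_one hq).const_mul z).pow k).const_mul
      (qBinomCoeff a q k)
  have hsum : ∑' k, qBinomCoeff a q k * 0 ^ k = 1 := by
    rw [tsum_eq_single 0 fun k hk => by simp [hk], pow_zero, mul_one, qBinomCoeff_zero]
  rw [← hsum]
  refine tendsto_tsum_of_dominated_convergence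
    ((summable_geometric_of_lt_one (norm_nonneg z) hz).mul_left M) hlim
    (Eventually.of_forall fun n k => ?_)
  rw [norm_mul, norm_pow]
  gcongr
  · exact (norm_nonneg _).trans (hM 0)
  · exact hM k
  · rw [norm_mul, norm_pow]
    exact mul_le_of_le_one_right (norm_nonneg z) (pow_le_one₀ (norm_nonneg q) hq.le)

theorem qBinomSeries_eq (hq : ‖q‖ < 1) (a : ℂ) {z : ℂ} (hz : ‖z‖ < 1) :
    qBinomSeries a q z = qPochInf (a * z) q / qPochInf z q := by
  have hlim := ((tendsto_qPoch hq (a * z)).mul (tendsto_qBinomSeries_mul_pow hq a hz)).congr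
    fun n => (qPoch_mul_qBinomSeries hq a hz n).symm
  have heq := tendsto_nhds_unique hlim ((tendsto_qPoch hq z).mul_const (qBinomSeries a q z))
  rw [eq_div_iff (qPochInf_ne_zero_of_norm_lt_one hq hz), mul_comm, ← heq, mul_one]

end QBinomial

lemma summable_mul_mul_pow_mul {f g : ℕ → ℂ} (hf : Summable fun k => ‖f k‖)
    (hg : Summable fun n => ‖g n‖) {q : ℂ} (hq : ‖q‖ ≤ 1) :
    Summable fun p : ℕ × ℕ => f p.1 * g p.2 * q ^ (p.1 * p.2) := by
  refine (hf.mul_norm hg).of_norm_bounded fun p => ?_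
  rw [norm_mul _ (q ^ _), norm_pow]
  exact mul_le_of_le_one_right (norm_nonneg _) (pow_le_one₀ (norm_nonneg q) hq)

theorem heine_first (a b c z q : ℂ) (hq : ‖q‖ < 1) (hz : ‖z‖ < 1)
    (hb : ‖b‖ < 1) (hb0 : b ≠ 0)
    (hc : ∀ n : ℕ, c ≠ (q ^ n)⁻¹) (haz : ∀ n : ℕ, a * z ≠ (q ^ n)⁻¹) :
    ∑' k : ℕ, qPoch a q k * qPoch b q k / (qPoch c q k * qPoch q q k) * z ^ k
      = qPochInf b q * qPochInf (a * z) q / (qPochInf c q * qPochInf z q)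
        * ∑' k : ℕ, qPoch (c / b) q k * qPoch z q k / (qPoch (a * z) q k * qPoch q q k) * b ^ k := by
  have hcInf := qPochInf_ne_zero_of_ne_inv_pow hq hc
  have hazInf := qPochInf_ne_zero_of_ne_inv_pow hq haz
  have hzInf := qPochInf_ne_zero_of_norm_lt_one hq hz
  set A : ℕ → ℂ := fun k => qBinomCoeff a q k * z ^ k
  set B : ℕ → ℂ := fun n => qBinomCoeff (c / b) q n * b ^ n
  have expand (k : ℕ) : qPoch a q k * qPoch b q k / (qPoch c q k * qPoch q q k) * z ^ k
      = qPochInf b q / qPochInf c q * ∑' n, A k * B n * q ^ (k * n) := by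
    have hbk := norm_mul_pow_lt_one hq.le hb k
    have hqb := qBinomSeries_eq hq (c / b) hbk
    rw [show c / b * (b * q ^ k) = c * q ^ k by field_simp] at hqb
    calc _ = A k * (qPoch b q k / qPoch c q k) := by simp only [A, qBinomCoeff]; ring
      _ = A k * (qPochInf b q / qPochInf c q * qBinomSeries (c / b) q (b * q ^ k)) := by
        rw [qPoch_div_qPoch hq hcInf (qPochInf_ne_zero_of_norm_lt_one hq hbk), hqb]
      _ = _ := by
        rw [qBinomSeries, ← tsum_mul_left, ← tsum_mul_left, ← tsum_mul_left]
        exact tsum_congr fun n => by simp only [B]; ring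
  have contract (n : ℕ) : ∑' k, A k * B n * q ^ (k * n) = qPochInf (a * z) q / qPochInf z q
      * (qPoch (c / b) q n * qPoch z q n / (qPoch (a * z) q n * qPoch q q n) * b ^ n) := by
    have hzn := norm_mul_pow_lt_one hq.le hz n
    have hzqn := qPochInf_ne_zero_of_norm_lt_one hq hzn
    have hratio : qPochInf (a * z * q ^ n) q / qPochInf (z * q ^ n) q
        = qPochInf (a * z) q / qPochInf z q * (qPoch z q n / qPoch (a * z) q n) := by
      rw [qPoch_div_qPoch hq hazInf hzqn]
      field_simp
    calc _ = B n * qBinomSeries a q (z * q ^ n) := by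
          rw [qBinomSeries, ← tsum_mul_left]
          exact tsum_congr fun k => by simp only [A]; ring
      _ = B n * (qPochInf (a * z * q ^ n) q / qPochInf (z * q ^ n) q) := by
          rw [qBinomSeries_eq hq a hzn, ← mul_assoc a]
      _ = _ := by
          rw [hratio]
          simp only [B, qBinomCoeff]
          ring
  have hsum := summable_mul_mul_pow_mul (summable_norm_qBinomCoeff_mul_pow hq a hz)
    (summable_norm_qBinomCoeff_mul_pow hq (c / b) hb) hq.le
  rw [tsum_congr expand, tsum_mul_left, ← hsum.tsum_comm (f := fun k n => A k * B n * q ^ (k * n)),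
    tsum_congr contract, tsum_mul_left]
  ring
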